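/- Let (T, f) be a depth-decomposition of a vector matroid M = (X, I), and let S be a primary branch of T that is not at capacity, whose root u is not the root of T. Let T' be the rooted tree obtained from T by changing the root of S to the parent of u (i.e., detaching the subtree of S below u and reattaching it at the parent of u). Then (T', f) is again a depth-decomposition of M. -/

import Mathlib

/-! Infrastructure: rooted trees, depth-decompositions and branch-depth of matroids,
following the definitions of Kardoš, Král', Liebenau, Mach and of the paper
"Optimal matrix tree-depth and a row-invariant parameterized algorithm for
integer programming". -/

/-- A rooted tree on a (nonempty) finite vertex type `V`, given by its root and its
parent function: the parent of the root is the root itself, and from any vertex the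
root is reached by iterating the parent function. -/
structure RTree (V : Type) [Fintype V] [DecidableEq V] where
  root : V
  parent : V → V
  parent_root : parent root = root
  reach : ∀ v : V, ∃ n : ℕ, parent^[n] v = root

namespace RTree

variable {V : Type} [Fintype V] [DecidableEq V]

/-- A vertex is a leaf if it has no children. -/
def IsLeaf (T : RTree V) (v : V) : Prop :=
  ∀ u : V, T.parent u = v → u = v

/-- The non-root vertices on the path from `v` to the root of `T`; they are in bijective
correspondence with the edges of this path (each such vertex corresponds to the edge
joining it to its parent). -/
def pathEdges (T : RTree V) (v : V) : Set V :=
  {u | u ≠ T.root ∧ ∃ n : ℕ, T.parent^[n] v = u}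

/-- The number of edges of the tree. -/
def edgeCount (T : RTree V) : ℕ := Fintype.card V - 1

/-- The depth of a vertex: the number of edges on the path from the root to it. -/
noncomputable def depthV (T : RTree V) (v : V) : ℕ :=
  sInf {n : ℕ | T.parent^[n] v = T.root}

/-- The depth of the tree: the maximum number of edges on a path from the root to a leaf. -/
noncomputable def depth (T : RTree V) : ℕ :=
  Finset.univ.sup T.depthV

/-- The descendants of a vertex `u` (including `u` itself). -/
def desc (T : RTree V) (u : V) : Set V := {w | ∃ n : ℕ, T.parent^[n] w = u}

/-- The number of children of a vertex. -/
noncomputable def childCount (T : RTree V) (u : V) : ℕ :=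
  {w : V | T.parent w = u ∧ w ≠ u}.ncard

/-- A rooted tree is a rooted path if every vertex has at most one child. -/
def IsRootedPath (T : RTree V) : Prop := ∀ u : V, T.childCount u ≤ 1

/-- `a` is a strict ancestor of `v`. -/
def IsStrictAncestor (T : RTree V) (a v : V) : Prop :=
  a ≠ v ∧ ∃ n : ℕ, T.parent^[n] v = a

/-- A branch of `T` consists of a vertex `u`, exactly one child `u'` of `u` and all
descendants of `u'`; it is hence determined by the non-root vertex `u'` and denoted
here by `u'`.  Its root is `parent u'`, its vertex set is `{parent u'} ∪ desc u'`, and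
its edge number `‖S‖` is `(desc u').ncard`.  The branch determined by `u'` is primary
if its root has at least two children and every (strict) ancestor of its root has
exactly one child. -/
def IsPrimaryBranch (T : RTree V) (u' : V) : Prop :=
  u' ≠ T.root ∧ 2 ≤ T.childCount (T.parent u') ∧
    ∀ a : V, T.IsStrictAncestor a (T.parent u') → T.childCount a = 1

end RTree

/-- `(T, f)` is a depth-decomposition of the matroid on ground set `X` with rank
function `rk` and rank `r`: `f` maps elements of the matroid to leaves of `T`, the
number of edges of `T` equals the rank `r` of the matroid, and the rank of every
`X' ⊆ X` is at most the number of edges contained in the union of the paths in `T`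
from the root to the vertices `f x`, `x ∈ X'`. -/
def IsDepthDecompOn {X V : Type} [Fintype V] [DecidableEq V]
    (rk : Set X → ℕ) (r : ℕ) (T : RTree V) (f : X → V) : Prop :=
  (∀ x : X, T.IsLeaf (f x)) ∧ T.edgeCount = r ∧
    ∀ X' : Set X, rk X' ≤ (⋃ x ∈ X', T.pathEdges (f x)).ncard

/-- The branch-depth of the matroid on ground set `X` with rank function `rk` and
rank `r`: the smallest depth of a rooted tree forming a depth-decomposition. -/
noncomputable def branchDepth {X : Type} (rk : Set X → ℕ) (r : ℕ) : ℕ :=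
  sInf {d : ℕ | ∃ (nV : ℕ) (T : RTree (Fin (nV + 1))) (f : X → Fin (nV + 1)),
    IsDepthDecompOn rk r T f ∧ T.depth = d}

/-- The branch of `T` determined by the non-root vertex `u'` is at capacity: the rank
of the set `Ŝ` of matroid elements mapped by `f` to the leaves of the branch equals the
number `‖S‖` of edges of the branch plus the number of edges on the path from the root
of `T` to the root of the branch. -/
def AtCapacity {X V : Type} [Fintype V] [DecidableEq V]
    (rk : Set X → ℕ) (T : RTree V) (f : X → V) (u' : V) : Prop :=
  rk {x | f x ∈ T.desc u'} = (T.desc u').ncard + T.depthV (T.parent u')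

/-- The rank function of the vector matroid formed by the family of vectors `v`:
the rank of a subset is the dimension of its linear hull. -/
noncomputable def vecRk (F : Type) {W ι : Type} [Field F] [AddCommGroup W] [Module F W]
    (v : ι → W) (S : Set ι) : ℕ :=
  Module.finrank F (Submodule.span F (v '' S))

/-- `(T, f, g)` is an extended depth-decomposition of the vector matroid formed by the
family of vectors `v`: `(T, f)` is a depth-decomposition, the images under `g` of the
non-root vertices of `T` form a basis of the linear hull of the vectors, and every
vector `v x` lies in the linear hull of the `g`-image of the non-root vertices on the
path from `f x` to the root. -/
def IsExtDepthDecomp (F : Type) {W ι V : Type} [Field F] [AddCommGroup W] [Module F W]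
    [Fintype V] [DecidableEq V] (v : ι → W) (T : RTree V) (f : ι → V) (g : V → W) : Prop :=
  IsDepthDecompOn (vecRk F v) (vecRk F v Set.univ) T f ∧
  LinearIndependent F (fun u : {u : V // u ≠ T.root} => g u.val) ∧
  Submodule.span F (g '' {u : V | u ≠ T.root}) = Submodule.span F (Set.range v) ∧
  ∀ x : ι, v x ∈ Submodule.span F (g '' T.pathEdges (f x))

/-! Re-attaching removes the vertex `u = parent u'` from the root paths of the leaves of the
branch `S` and changes no other root path. As every strict ancestor of `u` has a single child,
every leaf lies below `u`; so if `X'` has an element outside `Ŝ`, then `u` stays in the union of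
its paths. If `X' ⊆ Ŝ` is nonempty, with union of paths `U ∋ u`, one needs `rk X' < |U|`.
Submodularity for `X' ∪ Ŝᶜ` and `Ŝ` gives `r + rk X' ≤ rk (X' ∪ Ŝᶜ) + rk Ŝ`. The paths of
`X' ∪ Ŝᶜ` avoid `S \ U`, so the first term is at most `r - |S \ U|`; the second is less than
`‖S‖ + depth u` because `S` is not at capacity; and `S ∩ U` together with the path to `u`
fits into `U`. -/

namespace RTree

variable {V : Type} [Fintype V] [DecidableEq V] (T : RTree V)

lemma iterate_parent_root (n : ℕ) : T.parent^[n] T.root = T.root :=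
  Function.iterate_fixed T.parent_root n

lemma eq_root_of_iterate_parent_eq {w : V} {n : ℕ} (hn : 0 < n) (h : T.parent^[n] w = w) :
    w = T.root := by
  obtain ⟨m, hm⟩ := T.reach w
  calc w = T.parent^[n * m] w := (Function.IsPeriodicPt.mul_const h m).eq.symm
    _ = T.parent^[n * m - m] (T.parent^[m] w) := by
      rw [← Function.iterate_add_apply, Nat.sub_add_cancel (Nat.le_mul_of_pos_left m hn)]
    _ = T.root := by rw [hm, T.iterate_parent_root]

lemma iterate_parent_depthV (w : V) : T.parent^[T.depthV w] w = T.root :=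
  Nat.sInf_mem (T.reach w)

lemma iterate_parent_ne_root_iff {w : V} {n : ℕ} :
    T.parent^[n] w ≠ T.root ↔ n < T.depthV w := by
  refine ⟨fun h => ?_, fun hn => Nat.notMem_of_lt_sInf hn⟩
  by_contra! hn
  rw [← Nat.sub_add_cancel hn, Function.iterate_add_apply, T.iterate_parent_depthV,
    T.iterate_parent_root] at h
  exact h rfl

lemma ncard_pathEdges (w : V) : (T.pathEdges w).ncard = T.depthV w := by
  have himage : T.pathEdges w = (fun n => T.parent^[n] w) '' Set.Iio (T.depthV w) := by
    ext y
    constructor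
    · rintro ⟨hy, n, rfl⟩
      exact ⟨n, T.iterate_parent_ne_root_iff.1 hy, rfl⟩
    · rintro ⟨n, hn, rfl⟩
      exact ⟨T.iterate_parent_ne_root_iff.2 hn, n, rfl⟩
  -- two equal points of the path would be a cycle, and only the root lies on one
  have hinj : ∀ a b, a < b → b < T.depthV w → T.parent^[a] w ≠ T.parent^[b] w := by
    intro a b hab hb h
    refine T.iterate_parent_ne_root_iff.2 (hab.trans hb)
      (T.eq_root_of_iterate_parent_eq (Nat.sub_pos_of_lt hab) ?_)
    rw [← Function.iterate_add_apply, Nat.sub_add_cancel hab.le, h]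
  rw [himage, Set.InjOn.ncard_image, ← Finset.coe_range, Set.ncard_coe_finset, Finset.card_range]
  intro a ha b hb h
  rcases lt_trichotomy a b with hab | rfl | hab
  · exact absurd h (hinj a b hab hb)
  · rfl
  · exact absurd h.symm (hinj b a hab ha)

lemma pathEdges_subset_ne_root (w : V) : T.pathEdges w ⊆ {y | y ≠ T.root} :=
  fun _ hy => hy.1

lemma ncard_ne_root : {y | y ≠ T.root}.ncard = T.edgeCount := by
  have h := Set.ncard_add_ncard_compl {T.root}
  rw [Set.ncard_singleton, Nat.card_eq_fintype_card] at h
  change ({T.root}ᶜ : Set V).ncard = Fintype.card V - 1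
  omega

lemma mem_desc_of_iterate_parent {u w : V} (n : ℕ) (h : T.parent^[n] w ∈ T.desc u) :
    w ∈ T.desc u := by
  obtain ⟨m, hm⟩ := h
  exact ⟨m + n, by rw [Function.iterate_add_apply, hm]⟩

lemma mem_desc_parent {u w : V} (hw : w ∈ T.desc u) : w ∈ T.desc (T.parent u) := by
  obtain ⟨k, hk⟩ := hw
  exact ⟨k + 1, by rw [Function.iterate_succ_apply', hk]⟩

lemma root_notMem_desc {u : V} (hu : u ≠ T.root) : T.root ∉ T.desc u := fun ⟨n, hn⟩ =>
  hu (hn.symm.trans (T.iterate_parent_root n))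

lemma parent_notMem_desc {u : V} (hu : u ≠ T.root) : T.parent u ∉ T.desc u := fun ⟨n, hn⟩ =>
  hu (T.eq_root_of_iterate_parent_eq n.succ_pos (by rwa [Function.iterate_succ_apply]))

lemma pathEdges_subset_of_mem_desc {u w : V} (hw : w ∈ T.desc u) :
    T.pathEdges u ⊆ T.pathEdges w := by
  obtain ⟨k, hk⟩ := hw
  rintro y ⟨hy, n, rfl⟩
  exact ⟨hy, n + k, by rw [Function.iterate_add_apply, hk]⟩

lemma pathEdges_subset_desc_union {u w : V} (hw : w ∈ T.desc u) :
    T.pathEdges w ⊆ T.desc u ∪ T.pathEdges (T.parent u) := by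
  obtain ⟨k, hk⟩ := hw
  rintro y ⟨hy, n, rfl⟩
  rcases le_or_gt n k with hn | hn
  · exact Or.inl ⟨k - n, by rw [← Function.iterate_add_apply, Nat.sub_add_cancel hn, hk]⟩
  · refine Or.inr ⟨hy, n - (k + 1), ?_⟩
    rw [← hk, ← Function.iterate_succ_apply' T.parent, ← Function.iterate_add_apply,
      Nat.sub_add_cancel hn]

lemma disjoint_desc_pathEdges_parent {u : V} (hu : u ≠ T.root) :
    Disjoint (T.desc u) (T.pathEdges (T.parent u)) :=
  Set.disjoint_left.2 fun _ hy ⟨_, n, hn⟩ =>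
    T.parent_notMem_desc hu (T.mem_desc_of_iterate_parent n (hn ▸ hy))

lemma eq_of_childCount_eq_one {a c d : V} (h : T.childCount a = 1) (hc : T.parent c = a)
    (hca : c ≠ a) (hd : T.parent d = a) (hda : d ≠ a) : c = d :=
  (Set.ncard_le_one).1 h.le c ⟨hc, hca⟩ d ⟨hd, hda⟩

lemma exists_child_of_isStrictAncestor {a u : V} (h : T.IsStrictAncestor a u) :
    ∃ c, T.parent c = a ∧ c ≠ a ∧ u ∈ T.desc c := by
  classical
  obtain ⟨hau, hex⟩ := h
  have hpos : 0 < Nat.find hex :=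
    Nat.pos_of_ne_zero fun h0 => hau (by simpa [h0] using (Nat.find_spec hex).symm)
  refine ⟨T.parent^[Nat.find hex - 1] u, ?_, Nat.find_min hex (Nat.sub_lt hpos one_pos), _, rfl⟩
  rw [← Function.iterate_succ_apply' T.parent, Nat.succ_eq_add_one, Nat.sub_one_add_one hpos.ne']
  exact Nat.find_spec hex

lemma mem_desc_or_isStrictAncestor {u : V}
    (hanc : ∀ a, T.IsStrictAncestor a u → T.childCount a = 1) (w : V) :
    w ∈ T.desc u ∨ T.IsStrictAncestor w u := by
  obtain ⟨n, hn⟩ := T.reach w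
  induction n generalizing w with
  | zero =>
    subst hn
    by_cases hu : T.root = u
    · exact Or.inl ⟨0, hu⟩
    · exact Or.inr ⟨hu, T.reach u⟩
  | succ n ih =>
    rw [Function.iterate_succ_apply] at hn
    rcases ih (T.parent w) hn with hp | hp
    · exact Or.inl (T.mem_desc_of_iterate_parent 1 hp)
    by_cases hw : w = T.parent w
    · rw [← hw] at hp
      exact Or.inr hp
    obtain ⟨c, hc, hca, huc⟩ := T.exists_child_of_isStrictAncestor hp
    obtain rfl : w = c := T.eq_of_childCount_eq_one (hanc _ hp) rfl hw hc hca
    by_cases hwu : w = u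
    · exact Or.inl ⟨0, hwu⟩
    · exact Or.inr ⟨hwu, huc⟩

variable {T}

lemma IsLeaf.childCount_eq_zero {w : V} (hw : T.IsLeaf w) : T.childCount w = 0 :=
  (Set.ncard_eq_zero).2 (Set.eq_empty_of_forall_notMem fun c hc => hc.2 (hw c hc.1))

lemma IsLeaf.mem_desc {u w : V} (hanc : ∀ a, T.IsStrictAncestor a u → T.childCount a = 1)
    (hw : T.IsLeaf w) : w ∈ T.desc u :=
  (T.mem_desc_or_isStrictAncestor hanc w).resolve_right fun h => by
    simpa [hw.childCount_eq_zero] using hanc w h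

structure IsReattach (T T' : RTree V) (u' : V) : Prop where
  root_eq : T'.root = T.root
  parent_eq : ∀ x, T'.parent x = if x = u' then T.parent (T.parent u') else T.parent x

namespace IsReattach

variable {T' : RTree V} {u' : V}

lemma parent_of_ne (h : T.IsReattach T' u') {x : V} (hx : x ≠ u') : T'.parent x = T.parent x := by
  rw [h.parent_eq, if_neg hx]

lemma parent_self (h : T.IsReattach T' u') : T'.parent u' = T.parent (T.parent u') := by
  rw [h.parent_eq, if_pos rfl]

lemma iterate_parent_of_forall_ne (h : T.IsReattach T' u') {w : V} {n : ℕ}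
    (hne : ∀ m < n, T.parent^[m] w ≠ u') : T'.parent^[n] w = T.parent^[n] w := by
  induction n with
  | zero => rfl
  | succ n ih =>
    rw [Function.iterate_succ_apply', Function.iterate_succ_apply', ih fun m hm => hne m (by omega),
      h.parent_of_ne (hne n n.lt_succ_self)]

lemma pathEdges_of_notMem_desc (h : T.IsReattach T' u') {w : V} (hw : w ∉ T.desc u') :
    T'.pathEdges w = T.pathEdges w := by
  have hit (n : ℕ) : T'.parent^[n] w = T.parent^[n] w :=
    h.iterate_parent_of_forall_ne fun m _ hm => hw ⟨m, hm⟩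
  simp only [pathEdges, h.root_eq, hit]

/-- With `u'` at position `k` on the root path of `w`, the new root path is the old one with the
vertex `T.parent u'` at position `k + 1` removed. -/
lemma iterate_parent_of_mem_desc (h : T.IsReattach T' u') (hu' : u' ≠ T.root) {w : V} {k : ℕ}
    (hk : T.parent^[k] w = u') (hmin : ∀ m < k, T.parent^[m] w ≠ u') (n : ℕ) :
    T'.parent^[n] w = T.parent^[if n ≤ k then n else n + 1] w := by
  split_ifs with hn
  · exact h.iterate_parent_of_forall_ne fun m hm => hmin m (by omega)
  obtain ⟨m, rfl⟩ := Nat.exists_eq_add_of_lt (not_le.1 hn)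
  have hgrand : T.parent (T.parent u') ∉ T.desc u' := fun hd =>
    T.parent_notMem_desc hu' (T.mem_desc_of_iterate_parent 1 hd)
  have hstep : T'.parent^[k + 1] w = T.parent (T.parent u') := by
    rw [Function.iterate_succ_apply', h.iterate_parent_of_forall_ne hmin, hk, h.parent_self]
  calc T'.parent^[k + m + 1] w = T'.parent^[m] (T'.parent^[k + 1] w) := by
        rw [← Function.iterate_add_apply]; congr 1; omega
    _ = T.parent^[m] (T.parent (T.parent u')) := by
        rw [hstep, h.iterate_parent_of_forall_ne fun j _ hj => hgrand ⟨j, hj⟩]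
    _ = T.parent^[k + m + 1 + 1] w := by
        rw [← hk, ← Function.iterate_succ_apply' T.parent, ← Function.iterate_succ_apply' T.parent,
          ← Function.iterate_add_apply]
        congr 1
        omega

lemma pathEdges_of_mem_desc (h : T.IsReattach T' u') (hu' : u' ≠ T.root) {w : V}
    (hw : w ∈ T.desc u') : T'.pathEdges w = T.pathEdges w \ {T.parent u'} := by
  classical
  obtain ⟨k, hk, hmin⟩ : ∃ k, T.parent^[k] w = u' ∧ ∀ m < k, T.parent^[m] w ≠ u' :=
    ⟨Nat.find hw, Nat.find_spec hw, fun m => Nat.find_min hw⟩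
  have hku : T.parent^[k + 1] w = T.parent u' := by
    rw [Function.iterate_succ_apply', hk]
  ext y
  simp only [pathEdges, h.root_eq, h.iterate_parent_of_mem_desc hu' hk hmin, Set.mem_sdiff,
    Set.mem_ofPred_eq, Set.mem_singleton_iff]
  constructor
  · rintro ⟨hy, n, rfl⟩
    refine ⟨⟨hy, _, rfl⟩, fun hyu => ?_⟩
    split_ifs at hy hyu with hn
    · refine T.parent_notMem_desc hu' (hyu ▸ ⟨k - n, ?_⟩)
      rw [← Function.iterate_add_apply, Nat.sub_add_cancel hn, hk]
    · refine hy (hyu.trans (T.eq_root_of_iterate_parent_eq (n := n - k) (by omega) ?_))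
      rw [← hku, ← Function.iterate_add_apply, show n - k + (k + 1) = n + 1 by omega, hyu, hku]
  · rintro ⟨⟨hy, n, rfl⟩, hyu⟩
    refine ⟨hy, ?_⟩
    by_cases hn : n ≤ k
    · exact ⟨n, by rw [if_pos hn]⟩
    · have hnk : n ≠ k + 1 := fun hnk => hyu (by rw [hnk, hku])
      exact ⟨n - 1, by rw [if_neg (by omega), Nat.sub_add_cancel (by omega)]⟩

lemma pathEdges_subset_insert (h : T.IsReattach T' u') (hu' : u' ≠ T.root) (w : V) :
    T.pathEdges w ⊆ insert (T.parent u') (T'.pathEdges w) := by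
  by_cases hw : w ∈ T.desc u'
  · rw [h.pathEdges_of_mem_desc hu' hw]
    exact Set.subset_insert_sdiff_singleton _ _
  · rw [h.pathEdges_of_notMem_desc hw]
    exact Set.subset_insert _ _

lemma isLeaf (h : T.IsReattach T' u') (hu' : u' ≠ T.root) {w : V} (hw : T.IsLeaf w) :
    T'.IsLeaf w := by
  intro c hc
  by_cases hcu : c = u'
  · subst hcu
    rw [h.parent_self] at hc
    obtain rfl : T.parent c = w := hw _ hc
    exact absurd (T.eq_root_of_iterate_parent_eq one_pos (hw c rfl).symm) hu'
  · rw [h.parent_of_ne hcu] at hc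
    exact hw c hc

end IsReattach

end RTree

section DepthDecomp

open RTree

variable {X V : Type} [Fintype V] [DecidableEq V] {rk : Set X → ℕ} {T : RTree V} {f : X → V}

lemma IsDepthDecompOn.rk_preimage_desc_le {r : ℕ} (hdd : IsDepthDecompOn rk r T f) (u' : V) :
    rk {x | f x ∈ T.desc u'} ≤ (T.desc u').ncard + T.depthV (T.parent u') := by
  rw [← T.ncard_pathEdges]
  refine (hdd.2.2 _).trans ((Set.ncard_le_ncard ?_ (Set.toFinite _)).trans (Set.ncard_union_le _ _))
  exact Set.iUnion₂_subset fun x hx => T.pathEdges_subset_desc_union hx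

lemma IsDepthDecompOn.rk_lt_ncard_of_subset_desc
    (hsub : ∀ A B, rk (A ∪ B) + rk (A ∩ B) ≤ rk A + rk B)
    (hdd : IsDepthDecompOn rk (rk Set.univ) T f) {u' : V} (hu' : u' ≠ T.root)
    (hncap : ¬ AtCapacity rk T f u') {X' : Set X} (hX' : X' ⊆ {x | f x ∈ T.desc u'})
    (hne : X'.Nonempty) : rk X' < (⋃ x ∈ X', T.pathEdges (f x)).ncard := by
  set S := T.desc u'
  set Ŝ := {x | f x ∈ S}
  set U := ⋃ x ∈ X', T.pathEdges (f x)
  set W := ⋃ x ∈ X' ∪ Ŝᶜ, T.pathEdges (f x)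
  have hsubmod : rk Set.univ + rk X' ≤ rk (X' ∪ Ŝᶜ) + rk Ŝ := by
    have hunion : X' ∪ Ŝᶜ ∪ Ŝ = Set.univ := by
      rw [Set.union_assoc, Set.compl_union_self, Set.union_univ]
    have hinter : (X' ∪ Ŝᶜ) ∩ Ŝ = X' := by
      rw [Set.union_inter_distrib_right, Set.compl_inter_self, Set.union_empty,
        Set.inter_eq_left.2 hX']
    simpa only [hunion, hinter] using hsub (X' ∪ Ŝᶜ) Ŝ
  have hŜ : rk Ŝ < S.ncard + T.depthV (T.parent u') :=
    lt_of_le_of_ne (hdd.rk_preimage_desc_le u') hncap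
  -- the paths of `X' ∪ Ŝᶜ` meet the branch only inside `U`
  have hW : W.ncard + (S \ U).ncard ≤ rk Set.univ := by
    have hdisj : Disjoint W (S \ U) := by
      refine Set.disjoint_left.2 fun y hyW hyS => ?_
      obtain ⟨x, hx, hyx⟩ := Set.mem_iUnion₂.1 hyW
      rcases hx with hx | hx
      · exact hyS.2 (Set.mem_biUnion hx hyx)
      · obtain ⟨_, n, hn⟩ := hyx
        exact hx (T.mem_desc_of_iterate_parent n (hn ▸ hyS.1))
    rw [← Set.ncard_union_eq hdisj (Set.toFinite _) (Set.toFinite _), ← hdd.2.1, ← T.ncard_ne_root]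
    refine Set.ncard_le_ncard (Set.union_subset ?_ fun y hy hyr => ?_) (Set.toFinite _)
    · exact Set.iUnion₂_subset fun x _ => T.pathEdges_subset_ne_root (f x)
    · exact T.root_notMem_desc hu' (hyr ▸ hy.1)
  have hU : (S ∩ U).ncard + T.depthV (T.parent u') ≤ U.ncard := by
    obtain ⟨x₀, hx₀⟩ := hne
    have hpath : T.pathEdges (T.parent u') ⊆ U :=
      (T.pathEdges_subset_of_mem_desc (T.mem_desc_parent (hX' hx₀))).trans
        (Set.subset_biUnion_of_mem (u := fun x => T.pathEdges (f x)) hx₀)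
    rw [← T.ncard_pathEdges, ← Set.ncard_union_eq
      ((T.disjoint_desc_pathEdges_parent hu').mono_left Set.inter_subset_left)
      (Set.toFinite _) (Set.toFinite _)]
    exact Set.ncard_le_ncard (Set.union_subset Set.inter_subset_right hpath) (Set.toFinite _)
  have hS := Set.ncard_inter_add_ncard_sdiff_eq_ncard S U (Set.toFinite _)
  have hWrk : rk (X' ∪ Ŝᶜ) ≤ W.ncard := hdd.2.2 _
  omega

theorem IsDepthDecompOn.of_isReattach (hsub : ∀ A B, rk (A ∪ B) + rk (A ∩ B) ≤ rk A + rk B)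
    (hdd : IsDepthDecompOn rk (rk Set.univ) T f) {u' : V} (hprim : T.IsPrimaryBranch u')
    (hncap : ¬ AtCapacity rk T f u') {T' : RTree V} (hT' : T.IsReattach T' u') :
    IsDepthDecompOn rk (rk Set.univ) T' f := by
  refine ⟨fun x => hT'.isLeaf hprim.1 (hdd.1 x), hdd.2.1, fun X' => ?_⟩
  have hU : (⋃ x ∈ X', T.pathEdges (f x)) ⊆ insert (T.parent u') (⋃ x ∈ X', T'.pathEdges (f x)) :=
    Set.iUnion₂_subset fun x hx => (hT'.pathEdges_subset_insert hprim.1 (f x)).trans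
      (Set.insert_subset_insert (Set.subset_biUnion_of_mem (u := fun x => T'.pathEdges (f x)) hx))
  by_cases hX' : X' ⊆ {x | f x ∈ T.desc u'}
  · rcases X'.eq_empty_or_nonempty with rfl | hne
    · simpa using hdd.2.2 ∅
    have hlt := hdd.rk_lt_ncard_of_subset_desc hsub hprim.1 hncap hX' hne
    have hle := (Set.ncard_le_ncard hU (Set.toFinite _)).trans (Set.ncard_insert_le _ _)
    omega
  -- the path of a leaf outside the branch already passes through `T.parent u'`
  obtain ⟨b, hb, hbS⟩ := Set.not_subset.1 hX'
  refine (hdd.2.2 X').trans (Set.ncard_le_ncard (fun y hy => ?_) (Set.toFinite _))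
  obtain ⟨x, -, hyr, -⟩ := Set.mem_iUnion₂.1 hy
  rcases hU hy with rfl | hy'
  · refine Set.mem_biUnion hb ?_
    rw [hT'.pathEdges_of_notMem_desc hbS]
    exact ⟨hyr, (hdd.1 b).mem_desc hprim.2.2⟩
  · exact hy'

end DepthDecomp

lemma vecRk_union_add_inter_le {F W ι : Type} [Field F] [AddCommGroup W] [Module F W]
    (v : ι → W) [FiniteDimensional F (Submodule.span F (Set.range v))] (A B : Set ι) :
    vecRk F v (A ∪ B) + vecRk F v (A ∩ B) ≤ vecRk F v A + vecRk F v B := by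
  have hfin (C : Set ι) : FiniteDimensional F (Submodule.span F (v '' C)) :=
    Submodule.finiteDimensional_of_le (Submodule.span_mono (Set.image_subset_range v C))
  have hinter : Module.finrank F (Submodule.span F (v '' (A ∩ B))) ≤
      Module.finrank F ↥(Submodule.span F (v '' A) ⊓ Submodule.span F (v '' B)) :=
    Submodule.finrank_mono (le_inf (Submodule.span_mono (Set.image_mono Set.inter_subset_left))
      (Submodule.span_mono (Set.image_mono Set.inter_subset_right)))
  have hmod := Submodule.finrank_sup_add_finrank_inf_eq (Submodule.span F (v '' A))
    (Submodule.span F (v '' B))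
  unfold vecRk
  rw [Set.image_union, Submodule.span_union]
  omega

theorem reattached_isDepthDecomp_general (F W ι : Type) [Field F] [AddCommGroup W]
    [Module F W] (v : ι → W) {V : Type} [Fintype V] [DecidableEq V]
    (T : RTree V) (f : ι → V)
    (hdd : IsDepthDecompOn (vecRk F v) (vecRk F v Set.univ) T f)
    (u' : V) (hprim : T.IsPrimaryBranch u')
    (hncap : ¬ AtCapacity (vecRk F v) T f u')
    (T' : RTree V) (hroot' : T'.root = T.root)
    (hpar' : ∀ x : V,
      T'.parent x = if x = u' then T.parent (T.parent u') else T.parent x) :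
    IsDepthDecompOn (vecRk F v) (vecRk F v Set.univ) T' f := by
  -- `finrank` is `0` on infinite-dimensional spaces, so finiteness must come from the
  -- rank of all vectors being the positive number of edges of `T`
  have : FiniteDimensional F (Submodule.span F (Set.range v)) := by
    have hcard : 1 < Fintype.card V := Fintype.one_lt_card_iff.2 ⟨u', T.root, hprim.1⟩
    have hpos : 0 < vecRk F v Set.univ := by
      rw [← hdd.2.1, RTree.edgeCount]
      omega
    rw [vecRk, Set.image_univ] at hpos
    exact Module.finite_of_finrank_pos hpos
  exact hdd.of_isReattach (vecRk_union_add_inter_le v) hprim hncap ⟨hroot', hpar'⟩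

/-- re-attaching a primary branch that is not at capacity. Let
`(T, f)` be a depth-decomposition of a vector matroid and let `S` be a primary branch of
`T` (determined by the non-root vertex `u'`, with root `u = parent u'`) that is not at
capacity and whose root `u` is not the root of `T`.  Let `T'` be the rooted tree
obtained from `T` by changing the root of `S` to the parent of `u`, i.e. by re-attaching
`u'` (together with its subtree) at the parent of `u`.  Then `(T', f)` is again a
depth-decomposition of the matroid. -/
theorem reattached_isDepthDecomp (F W ι : Type) [Field F] [AddCommGroup W]
    [Module F W] [Fintype ι] (v : ι → W) {V : Type} [Fintype V] [DecidableEq V]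
    (T : RTree V) (f : ι → V)
    (hdd : IsDepthDecompOn (vecRk F v) (vecRk F v Set.univ) T f)
    (u' : V) (hprim : T.IsPrimaryBranch u')
    (hncap : ¬ AtCapacity (vecRk F v) T f u')
    (hroot : T.parent u' ≠ T.root)
    (T' : RTree V) (hroot' : T'.root = T.root)
    (hpar' : ∀ x : V,
      T'.parent x = if x = u' then T.parent (T.parent u') else T.parent x) :
    IsDepthDecompOn (vecRk F v) (vecRk F v Set.univ) T' f :=
  reattached_isDepthDecomp_general F W ι v T f hdd u' hprim hncap T' hroot' hpar'
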